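/- arXiv:2407.21243 — 5 statements merged into one kernel-verified Lean document; each statement's English description precedes it below -/
import Mathlib

section
/- In the masked diffusion process, the single-coordinate conditional distribution at time t satisfies q_t(x^d | x^{\d}) = 1 - α_t if x^d = MASK, and q_t(x^d | x^{\d}) = α_t · q_{0|t}(x^d | x^{\d}) if x^d ≠ MASK, where q_{0|t}(·|x^{\d}) is the denoising conditional distribution of the d-th clean token given the other noisy coordinates. -/
/-- Single-coordinate conditional of the masked-diffusion marginal: with
per-coordinate kernel `k a b = α 𝟙{b = some a} + (1-α) 𝟙{b = none}` and marginal
`qt x = ∑_{x₀} q₀(x₀) ∏_d k (x₀ d) (x d)`, the conditional of coordinate `d`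
given the others satisfies `q_t(x^d | x^{∖d}) = 1 - α` when `x^d = MASK`, and
`q_t(x^d | x^{∖d}) = α · q_{0|t}(x^d | x^{∖d})` when `x^d ≠ MASK`, where
`q_{0|t}(· | x^{∖d})` is the denoising posterior of the clean token at `d` given
the other noisy coordinates. -/
theorem masked_diffusion_single_coordinate_conditional
    {S : Type*} [Fintype S] [DecidableEq S] {D : ℕ}
    (α : ℝ) (hα0 : 0 < α) (hα1 : α < 1)
    (q0 : (Fin D → S) → ℝ) (hq0 : ∀ x₀, 0 ≤ q0 x₀) (hq0sum : ∑ x₀, q0 x₀ = 1)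
    (k : S → Option S → ℝ)
    (hk : ∀ a b, k a b = α * (if b = some a then 1 else 0)
      + (1 - α) * (if b = none then 1 else 0))
    (qt : (Fin D → Option S) → ℝ)
    (hqt : ∀ x, qt x = ∑ x₀, q0 x₀ * ∏ d, k (x₀ d) (x d))
    (x : Fin D → Option S) (d : Fin D)
    (hm : 0 < ∑ v : Option S, qt (Function.update x d v))
    (hZ : 0 < ∑ x₀, q0 x₀ * ∏ e ∈ Finset.univ.erase d, k (x₀ e) (x e)) :
    (x d = none →
      qt x / (∑ v : Option S, qt (Function.update x d v)) = 1 - α) ∧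
    (∀ a : S, x d = some a →
      qt x / (∑ v : Option S, qt (Function.update x d v)) =
        α * ((∑ x₀ ∈ Finset.univ.filter (fun x₀ : Fin D → S => x₀ d = a),
                q0 x₀ * ∏ e ∈ Finset.univ.erase d, k (x₀ e) (x e)) /
             (∑ x₀, q0 x₀ * ∏ e ∈ Finset.univ.erase d, k (x₀ e) (x e)))) := by
  set Z := ∑ x₀, q0 x₀ * ∏ e ∈ Finset.univ.erase d, k (x₀ e) (x e) with hZdef
  have hprod : ∀ (v : Option S) (x₀ : Fin D → S),
      ∏ e, k (x₀ e) (Function.update x d v e)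
        = k (x₀ d) v * ∏ e ∈ Finset.univ.erase d, k (x₀ e) (x e) := by
    intro v x₀
    rw [← Finset.mul_prod_erase Finset.univ _ (Finset.mem_univ d)]
    rw [Function.update_self]
    congr 1
    refine Finset.prod_congr rfl fun e he => ?_
    rw [Function.update_of_ne (Finset.ne_of_mem_erase he)]
  have hqtx : qt x = ∑ x₀, q0 x₀ * (k (x₀ d) (x d)
      * ∏ e ∈ Finset.univ.erase d, k (x₀ e) (x e)) := by
    rw [hqt]
    refine Finset.sum_congr rfl fun x₀ _ => ?_
    rw [show (∏ e, k (x₀ e) (x e)) = ∏ e, k (x₀ e) (Function.update x d (x d) e) by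
      rw [Function.update_eq_self], hprod]
  have hksum : ∀ a : S, ∑ v : Option S, k a v = 1 := by
    intro a
    rw [Fintype.sum_option]
    simp only [hk]
    simp [Finset.sum_add_distrib, Finset.mul_sum]
  have hden : (∑ v : Option S, qt (Function.update x d v)) = Z := by
    calc (∑ v : Option S, qt (Function.update x d v))
        = ∑ v : Option S, ∑ x₀, q0 x₀ * (k (x₀ d) v
            * ∏ e ∈ Finset.univ.erase d, k (x₀ e) (x e)) := by
          refine Finset.sum_congr rfl fun v _ => ?_
          rw [hqt]
          exact Finset.sum_congr rfl fun x₀ _ => by rw [hprod]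
      _ = ∑ x₀, (∑ v : Option S, k (x₀ d) v) * (q0 x₀
            * ∏ e ∈ Finset.univ.erase d, k (x₀ e) (x e)) := by
          rw [Finset.sum_comm]
          refine Finset.sum_congr rfl fun x₀ _ => ?_
          rw [Finset.sum_mul]
          exact Finset.sum_congr rfl fun v _ => by ring
      _ = Z := by
          refine Finset.sum_congr rfl fun x₀ _ => ?_
          rw [hksum, one_mul]
  constructor
  · intro hnone
    have h1 : qt x = (1 - α) * Z := by
      rw [hqtx, hZdef, Finset.mul_sum]
      refine Finset.sum_congr rfl fun x₀ _ => ?_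
      rw [hnone, hk]
      simp
      ring
    rw [h1, hden, mul_div_assoc, div_self hZ.ne', mul_one]
  · intro a ha
    have h1 : qt x = α * ∑ x₀ ∈ Finset.univ.filter (fun x₀ : Fin D → S => x₀ d = a),
        q0 x₀ * ∏ e ∈ Finset.univ.erase d, k (x₀ e) (x e) := by
      rw [hqtx, Finset.mul_sum, Finset.sum_filter]
      refine Finset.sum_congr rfl fun x₀ _ => ?_
      rw [ha, hk]
      by_cases h : x₀ d = a
      · simp [h]; ring
      · have : ¬ (some a = some (x₀ d)) := by
          simpa using fun h' => h h'.symm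
        simp [h, this]
    rw [h1, hden, mul_div_assoc]
end

section
/- In the masked diffusion process, the conditional distribution of a non-mask token given the rest and given that it is not masked equals the denoising conditional: q_t(x^d | x^{\d}, x^d ≠ MASK) = q_{0|t}(x^d | x^{\d}) for x^d ∈ S. -/
/-- In masked diffusion, the conditional distribution of a non-mask token given
the other coordinates and given that it is not masked equals the denoising
conditional: `q_t(x^d | x^{∖d}, x^d ≠ MASK) = q_{0|t}(x^d | x^{∖d})`. -/
theorem masked_diffusion_nonmask_conditional_eq_denoising
    {S : Type*} [Fintype S] [DecidableEq S] {D : ℕ}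
    (α : ℝ) (hα0 : 0 < α) (hα1 : α < 1)
    (q0 : (Fin D → S) → ℝ) (hq0 : ∀ x₀, 0 ≤ q0 x₀) (hq0sum : ∑ x₀, q0 x₀ = 1)
    (k : S → Option S → ℝ)
    (hk : ∀ a b, k a b = α * (if b = some a then 1 else 0)
      + (1 - α) * (if b = none then 1 else 0))
    (qt : (Fin D → Option S) → ℝ)
    (hqt : ∀ x, qt x = ∑ x₀, q0 x₀ * ∏ d, k (x₀ d) (x d))
    (x : Fin D → Option S) (d : Fin D) (a : S) (hxd : x d = some a)
    (hZ : 0 < ∑ x₀, q0 x₀ * ∏ e ∈ Finset.univ.erase d, k (x₀ e) (x e)) :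
    qt x / (∑ v : S, qt (Function.update x d (some v))) =
      (∑ x₀ ∈ Finset.univ.filter (fun x₀ : Fin D → S => x₀ d = a),
          q0 x₀ * ∏ e ∈ Finset.univ.erase d, k (x₀ e) (x e)) /
        (∑ x₀, q0 x₀ * ∏ e ∈ Finset.univ.erase d, k (x₀ e) (x e)) := by
  have hαne : α ≠ 0 := ne_of_gt hα0
  have hnum : qt x = α * ∑ x₀ ∈ Finset.univ.filter (fun x₀ : Fin D → S => x₀ d = a),
      q0 x₀ * ∏ e ∈ Finset.univ.erase d, k (x₀ e) (x e) := by
    rw [hqt, Finset.mul_sum, Finset.sum_filter]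
    apply Finset.sum_congr rfl
    intro x₀ _
    rw [← Finset.mul_prod_erase Finset.univ _ (Finset.mem_univ d), hk, hxd]
    by_cases h : x₀ d = a
    · simp [h]; ring
    · have h2 : ¬ (some a = some (x₀ d)) := by simpa using fun e => h e.symm
      simp [h, h2]
  have hden : (∑ v : S, qt (Function.update x d (some v)))
      = α * ∑ x₀, q0 x₀ * ∏ e ∈ Finset.univ.erase d, k (x₀ e) (x e) := by
    have hv : ∀ v : S, qt (Function.update x d (some v)) =
        ∑ x₀, k (x₀ d) (some v) *
          (q0 x₀ * ∏ e ∈ Finset.univ.erase d, k (x₀ e) (x e)) := by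
      intro v
      rw [hqt]
      apply Finset.sum_congr rfl
      intro x₀ _
      rw [← Finset.mul_prod_erase Finset.univ _ (Finset.mem_univ d),
        Function.update_self]
      have : ∀ e ∈ Finset.univ.erase d,
          k (x₀ e) (Function.update x d (some v) e) = k (x₀ e) (x e) := by
        intro e he
        rw [Function.update_of_ne (Finset.ne_of_mem_erase he)]
      rw [Finset.prod_congr rfl this]
      ring
    rw [Finset.sum_congr rfl (fun v _ => hv v), Finset.sum_comm, Finset.mul_sum]
    apply Finset.sum_congr rfl
    intro x₀ _
    rw [← Finset.sum_mul]
    congr 1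
    have : ∀ v : S, k (x₀ d) (some v) = α * (if v = x₀ d then 1 else 0) := by
      intro v
      rw [hk]
      simp
    rw [Finset.sum_congr rfl (fun v _ => this v), ← Finset.mul_sum]
    simp
  rw [hnum, hden, mul_div_mul_left _ _ hαne]
end

section
/- For masked diffusion, the concrete score from a state with coordinate d masked to the state with coordinate d unmasked simplifies as s_t(M^d(x))_x := q_t(x)/q_t(M^d(x)) = (α_t/(1-α_t)) · q_{0|t}(x^d | M^d(x)), for any x with x^d ≠ MASK. -/
/-- Concrete-score simplification for masked diffusion: for a state `x` with
`x^d = some a ≠ MASK`, the score from `M^d(x)` to `x` satisfies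
`q_t(x)/q_t(M^d(x)) = (α/(1-α)) · q_{0|t}(x^d | M^d(x))`, where
`q_{0|t}(a | M^d(x))` is the denoising posterior of the `d`-th token. -/
theorem masked_diffusion_score_simplification
    {S : Type*} [Fintype S] [DecidableEq S] {D : ℕ}
    (α : ℝ) (hα0 : 0 < α) (hα1 : α < 1)
    (q0 : (Fin D → S) → ℝ) (hq0 : ∀ x₀, 0 ≤ q0 x₀) (hq0sum : ∑ x₀, q0 x₀ = 1)
    (k : S → Option S → ℝ)
    (hk : ∀ a b, k a b = α * (if b = some a then 1 else 0)
      + (1 - α) * (if b = none then 1 else 0))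
    (qt : (Fin D → Option S) → ℝ)
    (hqt : ∀ x, qt x = ∑ x₀, q0 x₀ * ∏ d, k (x₀ d) (x d))
    (x : Fin D → Option S) (d : Fin D) (a : S) (hxd : x d = some a)
    (hpos : 0 < qt (Function.update x d none)) :
    qt x / qt (Function.update x d none) =
      (α / (1 - α)) *
        ((∑ x₀ ∈ Finset.univ.filter (fun x₀ : Fin D → S => x₀ d = a),
            q0 x₀ * ∏ e, k (x₀ e) (Function.update x d none e)) /
          qt (Function.update x d none)) := by
  have h1α : (1:ℝ) - α ≠ 0 := by linarith
  have key : qt x * (1 - α) = α * ∑ x₀ ∈ Finset.univ.filter (fun x₀ : Fin D → S => x₀ d = a),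
      q0 x₀ * ∏ e, k (x₀ e) (Function.update x d none e) := by
    rw [hqt, Finset.sum_mul, Finset.mul_sum, Finset.sum_filter]
    apply Finset.sum_congr rfl
    intro x₀ _
    have hprodx : ∏ e, k (x₀ e) (x e)
        = k (x₀ d) (some a) * ∏ e ∈ Finset.univ.erase d, k (x₀ e) (x e) := by
      rw [← hxd]
      exact (Finset.mul_prod_erase _ _ (Finset.mem_univ d)).symm
    have hprodu : ∏ e, k (x₀ e) (Function.update x d none e)
        = (1 - α) * ∏ e ∈ Finset.univ.erase d, k (x₀ e) (x e) := by
      rw [← Finset.mul_prod_erase _ (fun e => k (x₀ e) (Function.update x d none e))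
        (Finset.mem_univ d), Function.update_self, hk]
      simp only [reduceIte]
      have : ((none : Option S) = some (x₀ d)) = False := by simp
      simp only [this, if_false, mul_zero, zero_add, mul_one]
      congr 1
      apply Finset.prod_congr rfl
      intro e he
      rw [Function.update_of_ne (Finset.ne_of_mem_erase he)]
    rw [hprodx, hk]
    by_cases h : x₀ d = a
    · simp only [h, if_pos rfl, reduceIte, hprodu]
      simp
      ring
    · have h2 : ¬ ((some a : Option S) = some (x₀ d)) := by simpa using (Ne.symm h)
      simp [h, h2]
  have hx : qt x = (α / (1 - α)) * ∑ x₀ ∈ Finset.univ.filter (fun x₀ : Fin D → S => x₀ d = a),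
      q0 x₀ * ∏ e, k (x₀ e) (Function.update x d none e) := by
    field_simp
    linarith [key]
  rw [hx, mul_div_assoc]
end

section
/- The Gumbel-top-k trick: if g_1, ..., g_D are i.i.d. standard Gumbel random variables and w_1, ..., w_D > 0, then the index d* = argmax_d (log w_d + g_d) is distributed according to Cat(w_d / ∑_{d'} w_{d'}); more generally, the ordered sequence of the top-k indices of (log w_d + g_d) is distributed as sampling k indices without replacement with probabilities proportional to w. -/
open MeasureTheory

open MeasureTheory Real Set Filter Topology ENNReal

namespace GumbelTopK


noncomputable def gum : Measure ℝ :=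
  volume.withDensity fun g => ENNReal.ofReal (Real.exp (-g - Real.exp (-g)))

lemma hasDerivAt_F (β : ℝ) (hβ : β ≠ 0) (x : ℝ) :
    HasDerivAt (fun x => β⁻¹ * Real.exp (-(β * Real.exp (-x))))
      (Real.exp (-x) * Real.exp (-(β * Real.exp (-x)))) x := by
  have h0 : HasDerivAt (fun x : ℝ => -x) (-1) x := (hasDerivAt_id x).neg
  have h1 : HasDerivAt (fun x : ℝ => Real.exp (-x)) (-Real.exp (-x)) x := by
    simpa [Function.comp_def] using (Real.hasDerivAt_exp (-x)).comp x h0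
  have h2 : HasDerivAt (fun x : ℝ => -(β * Real.exp (-x))) (β * Real.exp (-x)) x := by
    exact (h1.const_mul β).neg.congr_deriv (by ring)
  have h3 : HasDerivAt (fun x : ℝ => Real.exp (-(β * Real.exp (-x))))
      (Real.exp (-(β * Real.exp (-x))) * (β * Real.exp (-x))) x :=
    (Real.hasDerivAt_exp _).comp x h2
  have h4 := h3.const_mul β⁻¹
  refine h4.congr_deriv ?_
  linear_combination (Real.exp (-x) * Real.exp (-(β * Real.exp (-x)))) * inv_mul_cancel₀ hβ

lemma tendsto_F_atBot (β : ℝ) (hβ : 0 < β) :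
    Tendsto (fun x => β⁻¹ * Real.exp (-(β * Real.exp (-x)))) atBot (𝓝 0) := by
  have h1 : Tendsto (fun x : ℝ => Real.exp (-x)) atBot atTop :=
    Real.tendsto_exp_atTop.comp tendsto_neg_atBot_atTop
  have h2 : Tendsto (fun x : ℝ => -(β * Real.exp (-x))) atBot atBot :=
    tendsto_neg_atTop_atBot.comp (h1.const_mul_atTop hβ)
  have h3 : Tendsto (fun x : ℝ => Real.exp (-(β * Real.exp (-x)))) atBot (𝓝 0) :=
    Real.tendsto_exp_atBot.comp h2
  simpa using h3.const_mul β⁻¹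

lemma integrableOn_key {β : ℝ} (hβ : 0 < β) (c : ℝ) :
    IntegrableOn (fun x => Real.exp (-x) * Real.exp (-(β * Real.exp (-x)))) (Iic c) := by
  have hcont : Continuous (fun x => Real.exp (-x) * Real.exp (-(β * Real.exp (-x)))) := by
    fun_prop
  apply integrableOn_Iic_of_intervalIntegral_norm_tendsto
    (β⁻¹ * Real.exp (-(β * Real.exp (-c))) - 0) c
    (a := fun n : ℕ => -(n : ℝ)) (fun n => hcont.integrableOn_Ioc)
    (tendsto_neg_atBot_iff.2 tendsto_natCast_atTop_atTop)
  have heq : ∀ n : ℕ, (∫ x in (-(n:ℝ))..c, ‖Real.exp (-x) * Real.exp (-(β * Real.exp (-x)))‖)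
      = β⁻¹ * Real.exp (-(β * Real.exp (-c))) - β⁻¹ * Real.exp (-(β * Real.exp (-(-(n:ℝ))))) := by
    intro n
    rw [show (∫ x in (-(n:ℝ))..c, ‖Real.exp (-x) * Real.exp (-(β * Real.exp (-x)))‖)
        = ∫ x in (-(n:ℝ))..c, Real.exp (-x) * Real.exp (-(β * Real.exp (-x))) from
      intervalIntegral.integral_congr fun x _ => norm_of_nonneg (by positivity)]
    exact intervalIntegral.integral_eq_sub_of_hasDerivAt
      (fun x _ => hasDerivAt_F β hβ.ne' x) (hcont.intervalIntegrable _ _)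
  simp only [heq]
  exact (tendsto_const_nhds.sub ((tendsto_F_atBot β hβ).comp
    (tendsto_neg_atBot_iff.2 tendsto_natCast_atTop_atTop))).congr (by simp)

lemma integral_key {β : ℝ} (hβ : 0 < β) (c : ℝ) :
    ∫ x in Iic c, Real.exp (-x) * Real.exp (-(β * Real.exp (-x)))
      = β⁻¹ * Real.exp (-(β * Real.exp (-c))) := by
  rw [integral_Iic_of_hasDerivAt_of_tendsto' (fun x _ => hasDerivAt_F β hβ.ne' x)
    (integrableOn_key hβ c) (tendsto_F_atBot β hβ)]
  ring




lemma dens_eq (x : ℝ) : Real.exp (-x - Real.exp (-x))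
    = Real.exp (-x) * Real.exp (-(1 * Real.exp (-x))) := by
  rw [← Real.exp_add]; ring_nf

lemma gum_Iio (c : ℝ) : gum (Iio c) = ENNReal.ofReal (Real.exp (-Real.exp (-c))) := by
  rw [gum, withDensity_apply _ measurableSet_Iio]
  have h1 : ∀ x : ℝ, ENNReal.ofReal (Real.exp (-x - Real.exp (-x)))
      = ENNReal.ofReal (Real.exp (-x) * Real.exp (-(1 * Real.exp (-x)))) := by
    intro x; rw [dens_eq]
  rw [show (fun x : ℝ => ENNReal.ofReal (Real.exp (-x - Real.exp (-x))))
      = fun x : ℝ => ENNReal.ofReal (Real.exp (-x) * Real.exp (-(1 * Real.exp (-x)))) from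
    funext h1]
  rw [← ofReal_integral_eq_lintegral_ofReal
    ((integrableOn_key one_pos c).mono_set Iio_subset_Iic_self)
    (Filter.Eventually.of_forall fun x => by positivity)]
  rw [← integral_Iic_eq_integral_Iio, integral_key one_pos c]
  norm_num

instance : IsProbabilityMeasure gum := by
  constructor
  have h1 : (univ : Set ℝ) = ⋃ n : ℕ, Iio (n : ℝ) := by
    ext x
    simp only [mem_univ, mem_iUnion, mem_Iio, true_iff]
    exact exists_nat_gt x
  rw [h1]
  have h2 : Tendsto (fun n : ℕ => gum (Iio (n : ℝ))) atTop (𝓝 (gum (⋃ n : ℕ, Iio (n : ℝ)))) :=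
    tendsto_measure_iUnion_atTop fun a b hab => Iio_subset_Iio (by exact_mod_cast hab)
  have h3 : Tendsto (fun n : ℕ => gum (Iio (n : ℝ))) atTop (𝓝 1) := by
    simp only [gum_Iio]
    have : Tendsto (fun n : ℕ => Real.exp (-Real.exp (-(n : ℝ)))) atTop (𝓝 1) := by
      have e1 : Tendsto (fun n : ℕ => Real.exp (-(n : ℝ))) atTop (𝓝 0) :=
        Real.tendsto_exp_atBot.comp (tendsto_neg_atTop_atBot.comp tendsto_natCast_atTop_atTop)
      have := Real.continuous_exp.continuousAt.tendsto.comp (e1.neg)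
      simpa [Function.comp_def] using this
    have := ENNReal.tendsto_ofReal this
    simpa using this
  exact tendsto_nhds_unique h2 h3



variable {D : ℕ}

def topSet (w : Fin D → ℝ) {k : ℕ} (σ : Fin k → Fin D) (A : Finset (Fin D)) (t : ℝ) :
    Set (Fin D → ℝ) :=
  {g | (∀ i : Fin k, ∀ d ∈ A, (∀ j, j ≤ i → σ j ≠ d) →
          Real.log (w d) + g d < Real.log (w (σ i)) + g (σ i))
     ∧ ∀ d ∈ A, Real.log (w d) + g d < t}

lemma measurableSet_topSet (w : Fin D → ℝ) {k : ℕ} (σ : Fin k → Fin D) (A : Finset (Fin D))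
    (t : ℝ) : MeasurableSet (topSet w σ A t) := by
  have h1 : topSet w σ A t =
      (⋂ i : Fin k, ⋂ d ∈ A, {g : Fin D → ℝ | (∀ j, j ≤ i → σ j ≠ d) →
          Real.log (w d) + g d < Real.log (w (σ i)) + g (σ i)}) ∩
      ⋂ d ∈ A, {g : Fin D → ℝ | Real.log (w d) + g d < t} := by
    ext g
    simp only [topSet, mem_inter_iff, mem_iInter, mem_setOf_eq]
  rw [h1]
  have hlt : ∀ (d e : Fin D), MeasurableSet {g : Fin D → ℝ |
      Real.log (w d) + g d < Real.log (w e) + g e} := fun d e =>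
    measurableSet_lt (by fun_prop) (by fun_prop)
  refine MeasurableSet.inter ?_ ?_
  · refine MeasurableSet.iInter fun i => MeasurableSet.iInter fun d =>
      MeasurableSet.iInter fun _ => ?_
    by_cases hP : ∀ j, j ≤ i → σ j ≠ d
    · have he : {g : Fin D → ℝ | (∀ j, j ≤ i → σ j ≠ d) →
          Real.log (w d) + g d < Real.log (w (σ i)) + g (σ i)}
          = {g : Fin D → ℝ | Real.log (w d) + g d < Real.log (w (σ i)) + g (σ i)} := by
        ext g; simp only [mem_setOf_eq]; exact ⟨fun h => h hP, fun h _ => h⟩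
      rw [he]; exact hlt d (σ i)
    · have he : {g : Fin D → ℝ | (∀ j, j ≤ i → σ j ≠ d) →
          Real.log (w d) + g d < Real.log (w (σ i)) + g (σ i)} = univ := by
        ext g; simp only [mem_setOf_eq, mem_univ, iff_true]
        intro h; exact absurd h hP
      rw [he]; exact MeasurableSet.univ
  · exact MeasurableSet.iInter fun d => MeasurableSet.iInter fun _ =>
      measurableSet_lt (by fun_prop) measurable_const

lemma topSet_update_of_not_mem {w : Fin D → ℝ} {k : ℕ} {σ : Fin k → Fin D}
    {A : Finset (Fin D)} {t : ℝ} {i₀ : Fin D} (hi₀ : i₀ ∉ A) (hA : ∀ i, σ i ∈ A)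
    (g : Fin D → ℝ) (y : ℝ) :
    Function.update g i₀ y ∈ topSet w σ A t ↔ g ∈ topSet w σ A t := by
  have hup : ∀ d ∈ A, Function.update g i₀ y d = g d := by
    intro d hd
    exact Function.update_of_ne (fun h : d = i₀ => hi₀ (h ▸ hd)) y g
  constructor
  · rintro ⟨h1, h2⟩
    constructor
    · intro i d hd hj
      have := h1 i d hd hj
      rwa [hup d hd, hup (σ i) (hA i)] at this
    · intro d hd
      have := h2 d hd
      rwa [hup d hd] at this
  · rintro ⟨h1, h2⟩
    constructor
    · intro i d hd hj
      rw [hup d hd, hup (σ i) (hA i)]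
      exact h1 i d hd hj
    · intro d hd
      rw [hup d hd]
      exact h2 d hd

lemma mem_topSet_succ {w : Fin D → ℝ} {k : ℕ} {σ : Fin (k + 1) → Fin D}
    {A : Finset (Fin D)} {t : ℝ} (hA : ∀ i, σ i ∈ A) (g : Fin D → ℝ) :
    g ∈ topSet w σ A t ↔
      (Real.log (w (σ 0)) + g (σ 0) < t ∧
       g ∈ topSet w (fun j => σ j.succ) (A.erase (σ 0)) (Real.log (w (σ 0)) + g (σ 0))) := by
  constructor
  · rintro ⟨h1, h2⟩
    refine ⟨h2 (σ 0) (hA 0), ⟨?_, ?_⟩⟩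
    · intro i d hd hj
      refine h1 i.succ d (Finset.mem_of_mem_erase hd) ?_
      intro j hji
      refine Fin.cases ?_ ?_ j hji
      · intro _
        exact fun h => (Finset.mem_erase.1 hd).1 h.symm
      · intro j' hj'
        exact hj j' (by rwa [← Fin.succ_le_succ_iff])
    · intro d hd
      refine h1 0 d (Finset.mem_of_mem_erase hd) ?_
      intro j hj
      rw [Fin.le_zero_iff] at hj
      subst hj
      exact fun h => (Finset.mem_erase.1 hd).1 h.symm
  · rintro ⟨h0, ⟨k1, k2⟩⟩
    constructor
    · intro i d hd hj
      have hdne : d ≠ σ 0 := fun h => hj 0 (Fin.zero_le i) h.symm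
      have hd' : d ∈ A.erase (σ 0) := Finset.mem_erase.2 ⟨hdne, hd⟩
      refine Fin.cases ?_ ?_ i hj
      · intro _
        exact k2 d hd'
      · intro i' hj'
        exact k1 i' d hd' fun j hji => hj' j.succ (Fin.succ_le_succ_iff.2 hji)
    · intro d hd
      rcases eq_or_ne d (σ 0) with rfl | hdne
      · exact h0
      · exact lt_trans (k2 d (Finset.mem_erase.2 ⟨hdne, hd⟩)) h0

lemma topSet_mono {w : Fin D → ℝ} {k : ℕ} {σ : Fin k → Fin D} {A : Finset (Fin D)}
    {t t' : ℝ} (h : t ≤ t') : topSet w σ A t ⊆ topSet w σ A t' :=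
  fun g ⟨h1, h2⟩ => ⟨h1, fun d hd => lt_of_lt_of_le (h2 d hd) h⟩



variable {D : ℕ}



lemma updateFinset_update_comm {i₀ : Fin D} {s : Finset (Fin D)} (hi₀ : i₀ ∉ s)
    (z : Fin D → ℝ) (y : ℝ) (Y : ∀ i : s, ℝ) :
    Function.updateFinset (Function.update z i₀ y) s Y
      = Function.update (Function.updateFinset z s Y) i₀ y := by
  ext j
  rcases eq_or_ne j i₀ with rfl | hj
  · simp [Function.updateFinset, hi₀]
  · simp [Function.updateFinset, Function.update_of_ne hj]

lemma updateFinset_apply_not_mem {i₀ : Fin D} {s : Finset (Fin D)} (hi₀ : i₀ ∉ s)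
    (z : Fin D → ℝ) (Y : ∀ i : s, ℝ) :
    Function.updateFinset z s Y i₀ = z i₀ := by
  simp [Function.updateFinset, hi₀]

lemma lmarginal_erase_of_indep (f : (Fin D → ℝ) → ℝ≥0∞) (hf : Measurable f) (i₀ : Fin D)
    (hind : ∀ g y, f (Function.update g i₀ y) = f g) (z : Fin D → ℝ) :
    (∫⋯∫⁻_Finset.univ.erase i₀, f ∂fun _ => gum) z
      = ∫⁻ g, f g ∂(Measure.pi fun _ : Fin D => gum) := by
  have h1 : ∫⁻ g, f g ∂(Measure.pi fun _ : Fin D => gum)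
      = (∫⋯∫⁻_Finset.univ, f ∂fun _ => gum) z := lintegral_eq_lmarginal_univ z
  rw [h1, ← Finset.insert_erase (Finset.mem_univ i₀),
    lmarginal_insert _ hf (Finset.notMem_erase i₀ _)]
  have h2 : ∀ y : ℝ, (∫⋯∫⁻_Finset.univ.erase i₀, f ∂fun _ => gum) (Function.update z i₀ y)
      = (∫⋯∫⁻_Finset.univ.erase i₀, f ∂fun _ => gum) z := by
    intro y
    simp only [lmarginal]
    apply lintegral_congr
    intro Y
    rw [updateFinset_update_comm (Finset.notMem_erase i₀ _), hind]
  simp_rw [h2]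
  simp



variable {D : ℕ}




lemma main_claim (w : Fin D → ℝ) (hw : ∀ d, 0 < w d) :
    ∀ (k : ℕ) (σ : Fin k → Fin D) (A : Finset (Fin D)),
      Function.Injective σ → (∀ i, σ i ∈ A) → ∀ t : ℝ,
      (Measure.pi fun _ : Fin D => gum) (topSet w σ A t) =
        ENNReal.ofReal ((∏ i, w (σ i) /
            ∑ d ∈ A.filter fun d => ∀ j, j < i → σ j ≠ d, w d)
          * Real.exp (-((∑ d ∈ A, w d) * Real.exp (-t)))) := by
  intro k
  induction k with
  | zero =>
    intro σ A hσ hA t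
    have hset : topSet w σ A t =
        Set.pi Set.univ (fun d => if d ∈ A then Iio (t - Real.log (w d)) else univ) := by
      ext g
      simp only [topSet, mem_setOf_eq, Set.mem_pi, mem_univ, forall_true_left]
      constructor
      · rintro ⟨-, h2⟩ d
        by_cases hd : d ∈ A
        · simp only [hd, if_true, mem_Iio]
          linarith [h2 d hd]
        · simp [hd]
      · intro h
        refine ⟨fun i => i.elim0, fun d hd => ?_⟩
        have := h d
        simp only [hd, if_true, mem_Iio] at this
        linarith
    rw [hset, Measure.pi_pi]
    have hval : ∀ d : Fin D, gum (if d ∈ A then Iio (t - Real.log (w d)) else univ)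
        = if d ∈ A then ENNReal.ofReal (Real.exp (-(w d * Real.exp (-t)))) else 1 := by
      intro d
      by_cases hd : d ∈ A
      · simp only [hd, if_true, gum_Iio]
        congr 2
        rw [neg_sub, Real.exp_sub, Real.exp_log (hw d), Real.exp_neg]
        ring
      · simp [hd]
    simp only [hval]
    rw [Finset.prod_ite_mem, Finset.univ_inter,
      ← ENNReal.ofReal_prod_of_nonneg (fun d _ => (Real.exp_nonneg _)),
      ← Real.exp_sum]
    have : ∑ d ∈ A, -(w d * Real.exp (-t)) = -((∑ d ∈ A, w d) * Real.exp (-t)) := by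
      rw [Finset.sum_mul, ← Finset.sum_neg_distrib]
    rw [this]
    simp
  | succ k IH =>
    intro σ A hσ hA t
    have hσ' : Function.Injective (fun j : Fin k => σ j.succ) :=
      fun a b h => Fin.succ_injective _ (hσ h)
    have hA' : ∀ i : Fin k, σ i.succ ∈ A.erase (σ 0) := fun i =>
      Finset.mem_erase.2 ⟨fun h => Fin.succ_ne_zero i (hσ h), hA _⟩
    have hi₀A : σ 0 ∈ A := hA 0
    have hi₀A' : σ 0 ∉ A.erase (σ 0) := Finset.notMem_erase _ _
    have hw₀ : 0 < w (σ 0) := hw (σ 0)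
    have hW'nonneg : 0 ≤ ∑ d ∈ A.erase (σ 0), w d :=
      Finset.sum_nonneg fun d _ => (hw d).le
    have hWsplit : ∑ d ∈ A, w d = w (σ 0) + ∑ d ∈ A.erase (σ 0), w d :=
      (Finset.add_sum_erase A w hi₀A).symm
    have hWpos : 0 < ∑ d ∈ A, w d := by rw [hWsplit]; positivity
    set C' : ℝ := ∏ i : Fin k, w (σ i.succ) /
        ∑ d ∈ (A.erase (σ 0)).filter fun d => ∀ j, j < i → σ j.succ ≠ d, w d with hC'
    have hC'nonneg : 0 ≤ C' := by
      apply Finset.prod_nonneg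
      intro i _
      have hnum := (hw (σ i.succ)).le
      have hden : 0 ≤ ∑ d ∈ (A.erase (σ 0)).filter fun d => ∀ j, j < i → σ j.succ ≠ d, w d :=
        Finset.sum_nonneg fun d _ => (hw d).le
      positivity
    have hSmeas := measurableSet_topSet w σ A t
    have hf : Measurable ((topSet w σ A t).indicator (1 : (Fin D → ℝ) → ℝ≥0∞)) :=
      measurable_const.indicator hSmeas
    have step1 : (Measure.pi fun _ : Fin D => gum) (topSet w σ A t)
        = ∫⁻ x, (∫⋯∫⁻_Finset.univ.erase (σ 0), (topSet w σ A t).indicator 1 ∂fun _ => gum)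
            (Function.update (fun _ => (0:ℝ)) (σ 0) x) ∂gum := by
      conv_lhs => rw [← lintegral_indicator_one hSmeas,
        lintegral_eq_lmarginal_univ (fun _ => (0:ℝ)),
        ← Finset.insert_erase (Finset.mem_univ (σ 0)),
        lmarginal_insert _ hf (Finset.notMem_erase (σ 0) _)]
    have step2 : ∀ x : ℝ,
        (∫⋯∫⁻_Finset.univ.erase (σ 0), (topSet w σ A t).indicator 1 ∂fun _ => gum)
          (Function.update (fun _ => (0:ℝ)) (σ 0) x)
        = (Iio (t - Real.log (w (σ 0)))).indicator
            (fun x => (Measure.pi fun _ : Fin D => gum)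
              (topSet w (fun j : Fin k => σ j.succ) (A.erase (σ 0)) (Real.log (w (σ 0)) + x))) x := by
      intro x
      have hgi₀ : ∀ Y : ∀ i : (Finset.univ.erase (σ 0) : Finset (Fin D)), ℝ,
          Function.updateFinset (Function.update (fun _ => (0:ℝ)) (σ 0) x)
            (Finset.univ.erase (σ 0)) Y (σ 0) = x := by
        intro Y
        rw [updateFinset_apply_not_mem (Finset.notMem_erase (σ 0) _)]
        simp
      by_cases hx : x < t - Real.log (w (σ 0))
      · rw [Set.indicator_of_mem (mem_Iio.2 hx)]
        have hfun : ∀ Y : ∀ i : (Finset.univ.erase (σ 0) : Finset (Fin D)), ℝ,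
            (topSet w σ A t).indicator (1 : (Fin D → ℝ) → ℝ≥0∞)
              (Function.updateFinset (Function.update (fun _ => (0:ℝ)) (σ 0) x)
                (Finset.univ.erase (σ 0)) Y)
            = (topSet w (fun j : Fin k => σ j.succ) (A.erase (σ 0))
                  (Real.log (w (σ 0)) + x)).indicator (1 : (Fin D → ℝ) → ℝ≥0∞)
              (Function.updateFinset (Function.update (fun _ => (0:ℝ)) (σ 0) x)
                (Finset.univ.erase (σ 0)) Y) := by
          intro Y
          set g := Function.updateFinset (Function.update (fun _ => (0:ℝ)) (σ 0) x)
            (Finset.univ.erase (σ 0)) Y with hg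
          have hmem := mem_topSet_succ (w := w) (t := t) hA g
          have hgx : g (σ 0) = x := hgi₀ Y
          rw [hgx] at hmem
          by_cases hgS : g ∈ topSet w (fun j : Fin k => σ j.succ) (A.erase (σ 0))
              (Real.log (w (σ 0)) + x)
          · rw [Set.indicator_of_mem hgS, Set.indicator_of_mem (hmem.2 ⟨by linarith, hgS⟩)]
          · rw [Set.indicator_of_notMem hgS, Set.indicator_of_notMem
              (fun hc => hgS (hmem.1 hc).2)]
        have heq2 : (∫⋯∫⁻_Finset.univ.erase (σ 0), (topSet w σ A t).indicator 1 ∂fun _ => gum)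
            (Function.update (fun _ => (0:ℝ)) (σ 0) x)
            = (∫⋯∫⁻_Finset.univ.erase (σ 0),
                (topSet w (fun j : Fin k => σ j.succ) (A.erase (σ 0))
                  (Real.log (w (σ 0)) + x)).indicator 1 ∂fun _ => gum)
              (Function.update (fun _ => (0:ℝ)) (σ 0) x) := by
          simp only [lmarginal]
          exact lintegral_congr hfun
        rw [heq2, ← lintegral_indicator_one (measurableSet_topSet w
          (fun j : Fin k => σ j.succ) (A.erase (σ 0)) (Real.log (w (σ 0)) + x))]
        apply lmarginal_erase_of_indep
        · exact measurable_const.indicator (measurableSet_topSet w _ _ _)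
        · intro g y
          by_cases hgS : g ∈ topSet w (fun j : Fin k => σ j.succ) (A.erase (σ 0))
              (Real.log (w (σ 0)) + x)
          · rw [Set.indicator_of_mem hgS, Set.indicator_of_mem
              ((topSet_update_of_not_mem hi₀A' hA' g y).2 hgS)]
            rfl
          · rw [Set.indicator_of_notMem hgS, Set.indicator_of_notMem
              (fun hc => hgS ((topSet_update_of_not_mem hi₀A' hA' g y).1 hc))]
      · rw [Set.indicator_of_notMem (by simpa using hx)]
        simp only [lmarginal]
        have hz : ∀ Y : ∀ i : (Finset.univ.erase (σ 0) : Finset (Fin D)), ℝ,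
            (topSet w σ A t).indicator (1 : (Fin D → ℝ) → ℝ≥0∞)
              (Function.updateFinset (Function.update (fun _ => (0:ℝ)) (σ 0) x)
                (Finset.univ.erase (σ 0)) Y) = 0 := by
          intro Y
          apply Set.indicator_of_notMem
          intro hc
          have := hc.2 (σ 0) hi₀A
          rw [show Function.updateFinset (Function.update (fun _ => (0:ℝ)) (σ 0) x)
                (Finset.univ.erase (σ 0)) Y (σ 0) = x from hgi₀ Y] at this
          exact hx (by linarith)
        simp only [hz]
        exact lintegral_zero
    rw [step1]
    simp only [step2]
    have hIH : ∀ x : ℝ,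
        (Measure.pi fun _ : Fin D => gum)
          (topSet w (fun j : Fin k => σ j.succ) (A.erase (σ 0)) (Real.log (w (σ 0)) + x))
        = ENNReal.ofReal (C' * Real.exp (-((∑ d ∈ A.erase (σ 0), w d)
            * Real.exp (-(Real.log (w (σ 0)) + x))))) :=
      fun x => IH (fun j => σ j.succ) (A.erase (σ 0)) hσ' hA' _
    simp only [hIH]
    rw [lintegral_indicator measurableSet_Iio]
    rw [show gum = volume.withDensity fun g => ENNReal.ofReal (Real.exp (-g - Real.exp (-g)))
      from rfl, restrict_withDensity measurableSet_Iio,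
      lintegral_withDensity_eq_lintegral_mul _ (by fun_prop) (by fun_prop)]
    have hβ : 0 < (∑ d ∈ A, w d) / w (σ 0) := by positivity
    have hpt : ∀ x : ℝ,
        ((fun g => ENNReal.ofReal (Real.exp (-g - Real.exp (-g)))) *
          fun x => ENNReal.ofReal (C' * Real.exp (-((∑ d ∈ A.erase (σ 0), w d)
            * Real.exp (-(Real.log (w (σ 0)) + x)))))) x
        = ENNReal.ofReal (C' * (Real.exp (-x)
            * Real.exp (-(((∑ d ∈ A, w d) / w (σ 0)) * Real.exp (-x))))) := by
      intro x
      simp only [Pi.mul_apply]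
      rw [← ENNReal.ofReal_mul (Real.exp_nonneg _)]
      congr 1
      have e1 : Real.exp (-(Real.log (w (σ 0)) + x)) = Real.exp (-x) / w (σ 0) := by
        rw [neg_add, Real.exp_add, Real.exp_neg (Real.log (w (σ 0))), Real.exp_log hw₀]
        ring
      have e2 : Real.exp (-x - Real.exp (-x)) = Real.exp (-x) * Real.exp (-Real.exp (-x)) := by
        rw [← Real.exp_add]; ring_nf
      rw [e1, e2]
      rw [show Real.exp (-x) * Real.exp (-Real.exp (-x)) *
          (C' * Real.exp (-((∑ d ∈ A.erase (σ 0), w d) * (Real.exp (-x) / w (σ 0)))))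
        = C' * (Real.exp (-x) * (Real.exp (-Real.exp (-x)) *
            Real.exp (-((∑ d ∈ A.erase (σ 0), w d) * (Real.exp (-x) / w (σ 0)))))) from by ring,
        ← Real.exp_add]
      congr 3
      rw [hWsplit]
      field_simp
      ring
    simp only [hpt]
    rw [← ofReal_integral_eq_lintegral_ofReal
      (((integrableOn_key hβ (t - Real.log (w (σ 0)))).mono_set Iio_subset_Iic_self).const_mul C')
      (Filter.Eventually.of_forall fun x => by positivity)]
    rw [MeasureTheory.integral_const_mul, ← integral_Iic_eq_integral_Iio,
      integral_key hβ (t - Real.log (w (σ 0)))]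
    congr 1
    have e3 : Real.exp (-(t - Real.log (w (σ 0)))) = w (σ 0) * Real.exp (-t) := by
      rw [show -(t - Real.log (w (σ 0))) = Real.log (w (σ 0)) + -t from by ring,
        Real.exp_add, Real.exp_log hw₀]
    have e4 : ((∑ d ∈ A, w d) / w (σ 0)) * (w (σ 0) * Real.exp (-t))
        = (∑ d ∈ A, w d) * Real.exp (-t) := by
      field_simp
    have hprod : (∏ i : Fin (k+1), w (σ i) /
          ∑ d ∈ A.filter fun d => ∀ j, j < i → σ j ≠ d, w d)
        = (w (σ 0) / ∑ d ∈ A, w d) * C' := by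
      rw [Fin.prod_univ_succ]
      congr 1
      · congr 1
        rw [Finset.filter_true_of_mem]
        intro d _ j hj
        exact absurd hj (Fin.not_lt_zero j)
      · apply Finset.prod_congr rfl
        intro i _
        congr 1
        congr 1
        ext d
        simp only [Finset.mem_filter, Finset.mem_erase]
        constructor
        · rintro ⟨hdA, h⟩
          exact ⟨⟨fun hh => h 0 (Fin.succ_pos i) hh.symm, hdA⟩,
            fun j hj => h j.succ (by rwa [Fin.succ_lt_succ_iff])⟩
        · rintro ⟨⟨hne, hdA⟩, h⟩
          refine ⟨hdA, fun j hj => ?_⟩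
          refine Fin.cases ?_ ?_ j hj
          · intro _
            exact fun hh => hne hh.symm
          · intro j' hj'
            exact h j' (by rwa [Fin.succ_lt_succ_iff] at hj')
    rw [e3, e4, hprod]
    rw [show ((∑ d ∈ A, w d) / w (σ 0))⁻¹ = w (σ 0) / ∑ d ∈ A, w d from by
      rw [inv_div]]
    ring


end GumbelTopK

open GumbelTopK in
/-- The Gumbel-top-k trick: let `g₁, …, g_D` be i.i.d. standard Gumbel random
variables (density `exp(-g - exp(-g))`, i.e. CDF `exp(-exp(-g))`) and let
`w_d > 0` be weights. For any injective tuple `σ : Fin k → Fin D`, the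
probability that `σ 0, σ 1, …, σ (k-1)` are (in order) the top-`k` indices of
the perturbed log-weights `log w_d + g_d` equals the probability of drawing
them in this order when sampling without replacement with probabilities
proportional to `w`:
`∏_i w_{σ i} / (∑_{d ∉ {σ j : j < i}} w_d)`.
The case `k = 1` is the classical Gumbel-max trick: the argmax is distributed
as `Cat(w_d / ∑ w)`. -/
theorem gumbel_top_k
    {D k : ℕ}
    (gumbel : Measure ℝ)
    (hgumbel : gumbel =
      volume.withDensity fun g => ENNReal.ofReal (Real.exp (-g - Real.exp (-g))))
    (μ : Measure (Fin D → ℝ)) (hμ : μ = Measure.pi fun _ : Fin D => gumbel)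
    (w : Fin D → ℝ) (hw : ∀ d, 0 < w d)
    (σ : Fin k → Fin D) (hσ : Function.Injective σ) (hk : k ≤ D) :
    μ {g : Fin D → ℝ | ∀ i : Fin k, ∀ d : Fin D,
        (∀ j : Fin k, j ≤ i → σ j ≠ d) →
        Real.log (w d) + g d < Real.log (w (σ i)) + g (σ i)} =
      ENNReal.ofReal (∏ i : Fin k,
        w (σ i) /
          ∑ d ∈ Finset.univ.filter (fun d : Fin D => ∀ j : Fin k, j < i → σ j ≠ d),
            w d) := by
  subst hgumbel
  subst hμ
  show (Measure.pi fun _ : Fin D => gum) _ = _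
  have hEeq : {g : Fin D → ℝ | ∀ i : Fin k, ∀ d : Fin D,
        (∀ j : Fin k, j ≤ i → σ j ≠ d) →
        Real.log (w d) + g d < Real.log (w (σ i)) + g (σ i)}
      = ⋃ n : ℕ, topSet w σ Finset.univ (n : ℝ) := by
    ext g
    simp only [mem_setOf_eq, mem_iUnion]
    constructor
    · intro h
      obtain ⟨n, hn⟩ := exists_nat_gt (∑ d : Fin D, |Real.log (w d) + g d|)
      refine ⟨n, ⟨fun i d _ => h i d, fun d _ => ?_⟩⟩
      have h1 : Real.log (w d) + g d ≤ |Real.log (w d) + g d| := le_abs_self _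
      have h2 : |Real.log (w d) + g d| ≤ ∑ d : Fin D, |Real.log (w d) + g d| :=
        Finset.single_le_sum (f := fun d => |Real.log (w d) + g d|)
          (fun d _ => abs_nonneg _) (Finset.mem_univ d)
      linarith
    · rintro ⟨n, ⟨h1, -⟩⟩
      exact fun i d hd => h1 i d (Finset.mem_univ d) hd
  rw [hEeq]
  have hmono : Monotone fun n : ℕ => topSet w σ Finset.univ (n : ℝ) :=
    fun a b hab => topSet_mono (by exact_mod_cast hab)
  have h2 := tendsto_measure_iUnion_atTop (μ := Measure.pi fun _ : Fin D => gum) hmono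
  have h3 : Tendsto
      (fun n : ℕ => (Measure.pi fun _ : Fin D => gum) (topSet w σ Finset.univ (n : ℝ)))
      atTop (𝓝 (ENNReal.ofReal (∏ i : Fin k,
        w (σ i) /
          ∑ d ∈ Finset.univ.filter (fun d : Fin D => ∀ j : Fin k, j < i → σ j ≠ d),
            w d))) := by
    have hmc := main_claim w hw k σ Finset.univ hσ (fun i => Finset.mem_univ _)
    simp only [hmc]
    apply ENNReal.tendsto_ofReal
    have e1 : Tendsto (fun n : ℕ => Real.exp (-((∑ d, w d) * Real.exp (-(n : ℝ)))))
        atTop (𝓝 1) := by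
      have h0 : Tendsto (fun n : ℕ => Real.exp (-(n : ℝ))) atTop (𝓝 0) :=
        Real.tendsto_exp_atBot.comp (tendsto_neg_atTop_atBot.comp tendsto_natCast_atTop_atTop)
      have := Real.continuous_exp.continuousAt.tendsto.comp ((h0.const_mul (∑ d, w d)).neg)
      simpa [Function.comp_def] using this
    have := e1.const_mul (∏ i : Fin k,
        w (σ i) /
          ∑ d ∈ Finset.univ.filter (fun d : Fin D => ∀ j : Fin k, j < i → σ j ≠ d),
            w d)
    simpa [mul_comm] using this
  exact tendsto_nhds_unique h2 h3
end

section
/- In the masked diffusion ELBO, for each t and for any denoiser p satisfying the hollow property (p(·|M^d(y)) depends on y only through y^{\d}), the two stochastic objectives L_M and L_M̄ have the same expectation over y, i.e. E_{q_{t|0}(y|x₀)}[(α_t'/(1-α_t)) ∑_{d ∈ M(y)} log p(x₀^d | M^d(y))] = E_{q_{t|0}(y|x₀)}[(α_t'/α_t) ∑_{d ∈ M̄(y)} log p(x₀^d | M^d(y))]. -/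
/-- Equality of the two masked-diffusion ELBO expressions: for the masking
kernel `q_{t|0}(y|x₀) = ∏_d [α 𝟙{y^d = x₀^d} + (1-α) 𝟙{y^d = MASK}]`, any
scalar `c` (playing the role of `α_t'`), and any "log-denoiser"
`p d y ≈ log p^θ(x₀^d | M^d(y))` satisfying the hollow property (the output at
`d` depends on `y` only through `y^{∖d}`), the mask-sum objective and the
non-mask-sum objective have the same expectation over `y ∼ q_{t|0}(·|x₀)`:
`E[(c/(1-α)) ∑_{d∈M(y)} p d y] = E[(c/α) ∑_{d∈M̄(y)} p d (M^d(y))]`. -/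
theorem masked_elbo_mask_sum_eq_nonmask_sum
    {S : Type*} [Fintype S] [DecidableEq S] {D : ℕ}
    (α : ℝ) (hα0 : 0 < α) (hα1 : α < 1) (c : ℝ)
    (x₀ : Fin D → S)
    (w : (Fin D → Option S) → ℝ)
    (hw : ∀ y, w y = ∏ d, (α * (if y d = some (x₀ d) then 1 else 0)
      + (1 - α) * (if y d = none then 1 else 0)))
    (p : Fin D → (Fin D → Option S) → ℝ)
    (hollow : ∀ (d : Fin D) (y z : Fin D → Option S),
      (∀ e, e ≠ d → y e = z e) → p d y = p d z) :
    ∑ y : Fin D → Option S, w y *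
        ((c / (1 - α)) * ∑ d ∈ Finset.univ.filter (fun d => y d = none), p d y) =
    ∑ y : Fin D → Option S, w y *
        ((c / α) * ∑ d ∈ Finset.univ.filter (fun d => y d ≠ none),
          p d (Function.update y d none)) := by
  have h1α : (1 : ℝ) - α ≠ 0 := by linarith
  have hαne : α ≠ 0 := ne_of_gt hα0
  -- key per-coordinate identity
  have key : ∀ d : Fin D,
      (∑ y ∈ Finset.univ.filter (fun y : Fin D → Option S => y d = none),
        w y * ((c / (1 - α)) * p d y)) =
      ∑ y ∈ Finset.univ.filter (fun y : Fin D → Option S => y d ≠ none),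
        w y * ((c / α) * p d (Function.update y d none)) := by
    intro d
    -- restrict RHS to y with y d = some (x₀ d)
    have hsub : (Finset.univ.filter (fun y : Fin D → Option S => y d = some (x₀ d))) ⊆
        Finset.univ.filter (fun y : Fin D → Option S => y d ≠ none) := by
      intro y hy
      simp only [Finset.mem_filter, Finset.mem_univ, true_and] at hy ⊢
      simp [hy]
    have hzero : ∀ y ∈ Finset.univ.filter (fun y : Fin D → Option S => y d ≠ none),
        y ∉ Finset.univ.filter (fun y : Fin D → Option S => y d = some (x₀ d)) →
        w y * ((c / α) * p d (Function.update y d none)) = 0 := by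
      intro y hy hy'
      simp only [Finset.mem_filter, Finset.mem_univ, true_and] at hy hy'
      have : w y = 0 := by
        rw [hw]
        apply Finset.prod_eq_zero (Finset.mem_univ d)
        simp [hy, hy']
      simp [this]
    rw [← Finset.sum_subset hsub hzero]
    -- bijection y ↦ update y d (some (x₀ d))
    refine Finset.sum_nbij' (fun y => Function.update y d (some (x₀ d)))
      (fun y => Function.update y d none) ?_ ?_ ?_ ?_ ?_
    · intro y hy; simp
    · intro y hy; simp
    · intro y hy
      simp only [Finset.mem_filter, Finset.mem_univ, true_and] at hy
      funext e
      by_cases he : e = d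
      · subst he; simp [hy]
      · simp [Function.update_of_ne he]
    · intro y hy
      simp only [Finset.mem_filter, Finset.mem_univ, true_and] at hy
      funext e
      by_cases he : e = d
      · subst he; simp [hy]
      · simp [Function.update_of_ne he]
    · intro y hy
      simp only [Finset.mem_filter, Finset.mem_univ, true_and] at hy
      have hupd : Function.update (Function.update y d (some (x₀ d))) d none = y := by
        funext e
        by_cases he : e = d
        · subst he; simp [hy]
        · simp [Function.update_of_ne he]
      rw [hupd, hw, hw]
      rw [← Finset.prod_erase_mul _ _ (Finset.mem_univ d),
          ← Finset.prod_erase_mul _ _ (Finset.mem_univ d)]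
      have hprod : ∀ e ∈ Finset.univ.erase d,
          (α * (if Function.update y d (some (x₀ d)) e = some (x₀ e) then (1:ℝ) else 0)
            + (1 - α) * (if Function.update y d (some (x₀ d)) e = none then 1 else 0)) =
          (α * (if y e = some (x₀ e) then (1:ℝ) else 0)
            + (1 - α) * (if y e = none then 1 else 0)) := by
        intro e he
        rw [Function.update_of_ne (Finset.ne_of_mem_erase he)]
      rw [Finset.prod_congr rfl hprod]
      simp only [hy, Function.update_self]
      simp only [if_pos rfl, reduceCtorEq, if_false]
      field_simp
      ring
  calc
    ∑ y : Fin D → Option S, w y *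
        ((c / (1 - α)) * ∑ d ∈ Finset.univ.filter (fun d => y d = none), p d y)
      = ∑ y : Fin D → Option S, ∑ d ∈ Finset.univ.filter (fun d => y d = none),
          w y * ((c / (1 - α)) * p d y) := by
        simp [Finset.mul_sum]
    _ = ∑ d : Fin D, ∑ y ∈ Finset.univ.filter (fun y : Fin D → Option S => y d = none),
          w y * ((c / (1 - α)) * p d y) := by
        rw [Finset.sum_comm' (s := Finset.univ)
          (t := fun y : Fin D → Option S => Finset.univ.filter (fun d => y d = none))
          (t' := Finset.univ)
          (s' := fun d : Fin D => Finset.univ.filter (fun y : Fin D → Option S => y d = none))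
          (by simp)]
    _ = ∑ d : Fin D, ∑ y ∈ Finset.univ.filter (fun y : Fin D → Option S => y d ≠ none),
          w y * ((c / α) * p d (Function.update y d none)) := by
        exact Finset.sum_congr rfl fun d _ => key d
    _ = ∑ y : Fin D → Option S, ∑ d ∈ Finset.univ.filter (fun d => y d ≠ none),
          w y * ((c / α) * p d (Function.update y d none)) := by
        rw [Finset.sum_comm' (s := Finset.univ)
          (t := fun d : Fin D => Finset.univ.filter (fun y : Fin D → Option S => y d ≠ none))
          (t' := Finset.univ)
          (s' := fun y : Fin D → Option S => Finset.univ.filter (fun d => y d ≠ none))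
          (by simp)]
    _ = _ := by simp [Finset.mul_sum]
end
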